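/- Let κ > 0, set α(t) = ∫₀^{κ√t} e^{-r²/2} dr and D(t) = (1/(2t²))·∫₀^∞ e^{-r²/(2t)} r³ sinh(κr) log(sinh(κr)/(κr)) dr for t > 0. Then for every t > 0: D(t) < (1/2)κ²t(κ²t + 5) + (1/2)κ t^{1/2}(κ⁴t² + 6κ²t + 3) e^{κ²t/2} α(t) - (1/2)√(π/2)·κ t^{1/2}(κ²t + 3) e^{κ²t/2} · log(1 + √(π/2)·κ²t(κ²t + 3) e^{κ²t/2} / (κ t^{1/2} + (κ²t + 1) e^{κ²t/2} α(t))). -/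

import Mathlib

open Real MeasureTheory

/-- `α(t) = ∫₀^{κ√t} e^{-r²/2} dr`. -/
noncomputable def alphaFun (κ t : ℝ) : ℝ :=
  ∫ r in (0 : ℝ)..(κ * Real.sqrt t), Real.exp (-r ^ 2 / 2)

/-- `D(t) = (1/(2t²)) ∫₀^∞ e^{-r²/(2t)} r³ sinh(κr) log(sinh(κr)/(κr)) dr`
(the derivative of `η`). -/
noncomputable def etaDeriv (κ t : ℝ) : ℝ :=
  (1 / (2 * t ^ 2)) * ∫ r in Set.Ioi (0 : ℝ),
    Real.exp (-r ^ 2 / (2 * t)) * r ^ 3 * Real.sinh (κ * r) *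
      Real.log (Real.sinh (κ * r) / (κ * r))

/-! The elementary bound `log (sinh x / x) < x - log (1 + x)`, combined with the tangent line
of the concave function `r ↦ log (1 + κ r)` at a point `b`, gives
`r log (sinh (κr) / (κr)) < κ r² - r log (1 + κ b) - κ b (r - b) / (1 + κ b)`.
Integrating against the weight `e^{-r²/(2t)} r² sinh (κr)`, with `b` the mean of `r` for this
weight, kills the last term: `2 t² D(t) < κ J₄ - J₃ log (1 + κ J₃ / J₂)` for the moments
`J_k = ∫₀^∞ e^{-r²/(2t)} r^k sinh (κr) dr`. Since `e^{-r²/(2t)} sinh (κr)` is a difference of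
two shifted Gaussians, each `J_k` has an elementary primitive in terms of `∫₀^x e^{-u²/2} du`,
and the closed forms of `J₂, J₃, J₄` turn this into the stated bound. -/

open Set Filter Topology Asymptotics

noncomputable def gaussPrimitive (x : ℝ) : ℝ :=
  ∫ u in (0 : ℝ)..x, exp (-u ^ 2 / 2)

lemma continuous_exp_neg_sq_div_two : Continuous fun u : ℝ => exp (-u ^ 2 / 2) := by
  fun_prop

lemma hasDerivAt_gaussPrimitive (x : ℝ) : HasDerivAt gaussPrimitive (exp (-x ^ 2 / 2)) x :=
  intervalIntegral.integral_hasDerivAt_right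
    (continuous_exp_neg_sq_div_two.intervalIntegrable 0 x)
    (continuous_exp_neg_sq_div_two.stronglyMeasurableAtFilter _ _)
    continuous_exp_neg_sq_div_two.continuousAt

lemma gaussPrimitive_neg (x : ℝ) : gaussPrimitive (-x) = -gaussPrimitive x := by
  rw [gaussPrimitive, intervalIntegral.integral_symm, ← neg_zero,
    ← intervalIntegral.integral_comp_neg fun u => exp (-u ^ 2 / 2)]
  simp [gaussPrimitive]

lemma tendsto_gaussPrimitive_atTop : Tendsto gaussPrimitive atTop (𝓝 (√(π / 2))) := by
  have hform : (fun u : ℝ => exp (-u ^ 2 / 2)) = fun u => exp (-(1 / 2) * u ^ 2) := by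
    ext u; ring_nf
  have hval : ∫ u in Ioi (0 : ℝ), exp (-u ^ 2 / 2) = √(π / 2) := by
    rw [hform, integral_gaussian_Ioi, show π / (1 / 2) = 2 ^ 2 * (π / 2) by ring,
      sqrt_mul (by positivity), sqrt_sq zero_le_two]
    ring
  rw [← hval]
  refine intervalIntegral_tendsto_integral_Ioi 0 ?_ tendsto_id
  rw [hform]
  exact (integrable_exp_neg_mul_sq (by norm_num)).integrableOn

noncomputable def shiftedGaussian (s B r : ℝ) : ℝ :=
  exp (-((r - B) / s) ^ 2 / 2)

section shiftedGaussian

variable {s : ℝ} (B : ℝ)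

lemma shiftedGaussian_le (hs : 0 < s) (r : ℝ) :
    shiftedGaussian s B r ≤ exp ((B / s) ^ 2 / 2) * exp (-(1 / (4 * s ^ 2)) * r ^ 2) := by
  rw [shiftedGaussian, ← exp_add, exp_le_exp, div_pow, div_pow]
  have hsq : r ^ 2 ≤ 2 * (r - B) ^ 2 + 2 * B ^ 2 := by nlinarith [sq_nonneg (r - 2 * B)]
  have : (r - B) ^ 2 / s ^ 2 ≥ (r ^ 2 / 2 - B ^ 2) / s ^ 2 := by gcongr; linarith
  field_simp at this ⊢
  linarith

lemma hasDerivAt_shiftedGaussian (r : ℝ) :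
    HasDerivAt (shiftedGaussian s B) (-(r - B) / s ^ 2 * shiftedGaussian s B r) r := by
  have h : HasDerivAt (fun r => -((r - B) / s) ^ 2 / 2) (-(r - B) / s ^ 2) r := by
    refine ((((((hasDerivAt_id' r).sub_const B).div_const s).fun_pow 2).fun_neg).div_const
      2).congr_deriv ?_
    field_simp
    ring
  unfold shiftedGaussian
  convert h.exp using 1
  ring

lemma integrableOn_pow_mul_shiftedGaussian (hs : 0 < s) (k : ℕ) :
    IntegrableOn (fun r => r ^ k * shiftedGaussian s B r) (Ioi 0) := by
  have hdom :
      IntegrableOn (fun r : ℝ => r ^ (k : ℝ) * exp (-(1 / (4 * s ^ 2)) * r ^ 2)) (Ioi 0) :=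
    integrableOn_rpow_mul_exp_neg_mul_sq (by positivity) (by linarith [k.cast_nonneg (α := ℝ)])
  simp_rw [rpow_natCast] at hdom
  refine (hdom.const_mul (exp ((B / s) ^ 2 / 2))).mono' ?_ ?_
  · exact (by unfold shiftedGaussian; fun_prop : Continuous fun r =>
      r ^ k * shiftedGaussian s B r).aestronglyMeasurable
  · filter_upwards [ae_restrict_mem measurableSet_Ioi] with r (hr : 0 < r)
    rw [norm_of_nonneg (by unfold shiftedGaussian; positivity), mul_left_comm]
    exact mul_le_mul_of_nonneg_left (shiftedGaussian_le B hs r) (by positivity)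

lemma tendsto_eval_mul_shiftedGaussian_atTop (hs : 0 < s) (P : Polynomial ℝ) :
    Tendsto (fun r => P.eval r * shiftedGaussian s B r) atTop (𝓝 0) := by
  have hP : P.eval =O[atTop] (Polynomial.X ^ P.natDegree : Polynomial ℝ).eval :=
    Polynomial.isBigO_atTop_of_degree_le _ _ (by
      rw [Polynomial.degree_X_pow]; exact Polynomial.degree_le_natDegree)
  have hG : shiftedGaussian s B =O[atTop] fun r => exp (-(1 / (4 * s ^ 2)) * r ^ 2) :=
    IsBigO.of_bound _ (Eventually.of_forall fun r => by
      rw [shiftedGaussian, norm_of_nonneg (exp_pos _).le, norm_of_nonneg (exp_pos _).le]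
      exact shiftedGaussian_le B hs r)
  have hdecay := rpow_mul_exp_neg_mul_sq_isLittleO_exp_neg
    (by positivity : 0 < 1 / (4 * s ^ 2)) P.natDegree
  simp_rw [rpow_natCast] at hdecay
  have hexp : Tendsto (fun r : ℝ => exp (-(1 / 2) * r)) atTop (𝓝 0) :=
    tendsto_exp_atBot.comp (tendsto_id.const_mul_atTop_of_neg (by norm_num))
  refine ((hP.mul hG).trans_isLittleO ?_).trans_tendsto hexp
  simpa only [Polynomial.eval_pow, Polynomial.eval_X] using hdecay

theorem integral_Ioi_pow_mul_shiftedGaussian (hs : 0 < s) (c : ℝ) (k : ℕ) (P : Polynomial ℝ)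
    -- `hP` makes `r ↦ c * gaussPrimitive ((r - B) / s) - P.eval r * shiftedGaussian s B r`
    -- a primitive of `r ↦ r ^ k * shiftedGaussian s B r`.
    (hP : ∀ r, P.derivative.eval r = c / s + P.eval r * (r - B) / s ^ 2 - r ^ k) :
    ∫ r in Ioi 0, r ^ k * shiftedGaussian s B r =
      c * (√(π / 2) + gaussPrimitive (B / s)) + P.eval 0 * exp (-(B / s) ^ 2 / 2) := by
  have hderiv (r : ℝ) : HasDerivAt
      (fun r => c * gaussPrimitive ((r - B) / s) - P.eval r * shiftedGaussian s B r)
      (r ^ k * shiftedGaussian s B r) r := by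
    have hE := (hasDerivAt_gaussPrimitive ((r - B) / s)).comp r
      (((hasDerivAt_id' r).sub_const B).div_const s)
    refine ((hE.const_mul c).sub ((P.hasDerivAt r).mul
      (hasDerivAt_shiftedGaussian B r))).congr_deriv ?_
    rw [hP, ← shiftedGaussian]
    field_simp
    ring
  have hlin : Tendsto (fun r => (r - B) / s) atTop atTop :=
    (tendsto_atTop_add_const_right _ (-B) tendsto_id).atTop_div_const hs
  have hlim : Tendsto (fun r => c * gaussPrimitive ((r - B) / s) - P.eval r * shiftedGaussian s B r)
      atTop (𝓝 (c * √(π / 2) - 0)) :=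
    ((tendsto_gaussPrimitive_atTop.comp hlin).const_mul c).sub
      (tendsto_eval_mul_shiftedGaussian_atTop B hs P)
  rw [integral_Ioi_of_hasDerivAt_of_tendsto' (fun r _ => hderiv r)
    (integrableOn_pow_mul_shiftedGaussian B hs k) hlim]
  simp only [shiftedGaussian, zero_sub, neg_div, gaussPrimitive_neg, neg_sq]
  ring

open Polynomial in
lemma integral_Ioi_sq_mul_shiftedGaussian (hs : 0 < s) :
    ∫ r in Ioi 0, r ^ 2 * shiftedGaussian s B r =
      s * (s ^ 2 + B ^ 2) * (√(π / 2) + gaussPrimitive (B / s)) +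
        s ^ 2 * B * exp (-(B / s) ^ 2 / 2) := by
  rw [integral_Ioi_pow_mul_shiftedGaussian B hs (s * (s ^ 2 + B ^ 2)) 2 (C (s ^ 2) * (X + C B))
    fun r => by simp [derivative_pow]; field_simp; ring]
  simp

open Polynomial in
lemma integral_Ioi_pow_three_mul_shiftedGaussian (hs : 0 < s) :
    ∫ r in Ioi 0, r ^ 3 * shiftedGaussian s B r =
      s * B * (B ^ 2 + 3 * s ^ 2) * (√(π / 2) + gaussPrimitive (B / s)) +
        s ^ 2 * (B ^ 2 + 2 * s ^ 2) * exp (-(B / s) ^ 2 / 2) := by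
  rw [integral_Ioi_pow_mul_shiftedGaussian B hs (s * B * (B ^ 2 + 3 * s ^ 2)) 3
    (C (s ^ 2) * (X ^ 2 + C B * X + C (B ^ 2 + 2 * s ^ 2))) fun r => by
    simp [derivative_pow]; field_simp; ring]
  simp

open Polynomial in
lemma integral_Ioi_pow_four_mul_shiftedGaussian (hs : 0 < s) :
    ∫ r in Ioi 0, r ^ 4 * shiftedGaussian s B r =
      s * (B ^ 4 + 6 * s ^ 2 * B ^ 2 + 3 * s ^ 4) * (√(π / 2) + gaussPrimitive (B / s)) +
        s ^ 2 * B * (B ^ 2 + 5 * s ^ 2) * exp (-(B / s) ^ 2 / 2) := by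
  rw [integral_Ioi_pow_mul_shiftedGaussian B hs (s * (B ^ 4 + 6 * s ^ 2 * B ^ 2 + 3 * s ^ 4)) 4
    (C (s ^ 2) * (X ^ 3 + C B * X ^ 2 + C (B ^ 2 + 3 * s ^ 2) * X + C (B ^ 3 + 5 * s ^ 2 * B)))
    fun r => by simp [derivative_pow]; field_simp; ring]
  simp
  ring

end shiftedGaussian

lemma sinh_lt_mul_cosh {x : ℝ} (hx : 0 < x) : sinh x < x * cosh x := by
  have hmono : StrictMonoOn (fun y => y * cosh y - sinh y) (Ici 0) := by
    refine strictMonoOn_of_deriv_pos (convex_Ici 0) (by fun_prop) fun y hy => ?_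
    rw [interior_Ici] at hy
    have hderiv : HasDerivAt (fun y => y * cosh y - sinh y) (y * sinh y) y :=
      (((hasDerivAt_id' y).mul (hasDerivAt_cosh y)).sub (hasDerivAt_sinh y)).congr_deriv (by ring)
    rw [hderiv.deriv]
    exact mul_pos hy (sinh_pos_iff.2 hy)
  simpa using hmono self_mem_Ici hx.le hx

lemma log_sinh_div_self_nonneg {x : ℝ} (hx : 0 < x) : 0 ≤ log (sinh x / x) :=
  log_nonneg ((one_le_div hx).2 (self_lt_sinh_iff.2 hx).le)

lemma log_sinh_div_self_lt {x : ℝ} (hx : 0 < x) : log (sinh x / x) < x - log (1 + x) := by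
  have hsinh : sinh x / x < exp x / (1 + x) := by
    rw [div_lt_div_iff₀ hx (by linarith), ← cosh_add_sinh]
    nlinarith [sinh_lt_mul_cosh hx]
  calc log (sinh x / x) < log (exp x / (1 + x)) :=
        log_lt_log (div_pos (sinh_pos_iff.2 hx) hx) hsinh
    _ = x - log (1 + x) := by rw [log_div (exp_ne_zero x) (by linarith), log_exp]

lemma mul_log_sinh_div_lt {κ r b : ℝ} (hκ : 0 < κ) (hr : 0 < r) (hb : 0 < b) :
    r * log (sinh (κ * r) / (κ * r)) <
      κ * r ^ 2 - r * log (1 + κ * b) - κ * b * (r - b) / (1 + κ * b) := by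
  have hsinh := mul_lt_mul_of_pos_left (log_sinh_div_self_lt (mul_pos hκ hr)) hr
  have hlog : κ * (r - b) / (1 + κ * r) ≤ log (1 + κ * r) - log (1 + κ * b) := by
    rw [← log_div (by positivity) (by positivity)]
    convert one_sub_inv_le_log_of_pos (show 0 < (1 + κ * r) / (1 + κ * b) by positivity) using 1
    field_simp
    ring
  -- `x ↦ x / (1 + κ x)` is increasing
  have hmono : κ * b * (r - b) / (1 + κ * b) ≤ r * (κ * (r - b) / (1 + κ * r)) := by
    rw [← mul_div_assoc, div_le_div_iff₀ (by positivity) (by positivity)]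
    nlinarith [mul_nonneg hκ.le (sq_nonneg (r - b))]
  nlinarith [mul_le_mul_of_nonneg_left hlog hr.le]

lemma setIntegral_lt_setIntegral_of_forall_lt {α : Type*} [MeasurableSpace α] {μ : Measure α}
    {s : Set α} {f g : α → ℝ} (hs : MeasurableSet s) (hμs : μ s ≠ 0) (hf : IntegrableOn f s μ)
    (hg : IntegrableOn g s μ) (hlt : ∀ x ∈ s, f x < g x) :
    ∫ x in s, f x ∂μ < ∫ x in s, g x ∂μ := by
  rw [← sub_pos, ← integral_sub hg hf,
    setIntegral_pos_iff_support_of_nonneg_ae (f := fun x => g x - f x) _ (hg.sub hf)]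
  · rw [inter_eq_right.2 fun x hx => Function.mem_support.2 (sub_pos.2 (hlt x hx)).ne']
    exact pos_iff_ne_zero.2 hμs
  · filter_upwards [ae_restrict_mem hs] with x hx using sub_nonneg.2 (hlt x hx).le

lemma exp_mul_sinh_eq_shiftedGaussian_sub {s : ℝ} (hs : s ≠ 0) (κ r : ℝ) :
    exp (-r ^ 2 / (2 * s ^ 2)) * sinh (κ * r) = exp (κ ^ 2 * s ^ 2 / 2) / 2 *
      (shiftedGaussian s (κ * s ^ 2) r - shiftedGaussian s (-(κ * s ^ 2)) r) := by
  have hexponent (ε : ℝ) :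
      -((r - ε * κ * s ^ 2) / s) ^ 2 / 2 =
        -r ^ 2 / (2 * s ^ 2) + ε * κ * r - κ ^ 2 * s ^ 2 / 2 * ε ^ 2 := by
    field_simp
    ring
  have hplus := hexponent 1
  have hminus := hexponent (-1)
  simp only [one_mul, neg_mul, one_pow, mul_one, neg_one_sq] at hplus hminus
  rw [shiftedGaussian, shiftedGaussian, hplus, hminus, sinh_eq]
  simp only [exp_add, exp_sub, exp_neg]
  field_simp

noncomputable def sinhMoment (κ t : ℝ) (k : ℕ) : ℝ :=
  ∫ r in Ioi 0, exp (-r ^ 2 / (2 * t)) * r ^ k * sinh (κ * r)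

section sinhMoment

variable {s t : ℝ}

lemma sinhMoment_eq_sub (hs : 0 < s) (κ : ℝ) (k : ℕ) :
    sinhMoment κ (s ^ 2) k = exp (κ ^ 2 * s ^ 2 / 2) / 2 *
      ((∫ r in Ioi 0, r ^ k * shiftedGaussian s (κ * s ^ 2) r) -
        ∫ r in Ioi 0, r ^ k * shiftedGaussian s (-(κ * s ^ 2)) r) := by
  rw [← integral_sub (integrableOn_pow_mul_shiftedGaussian _ hs k)
    (integrableOn_pow_mul_shiftedGaussian _ hs k), ← integral_const_mul, sinhMoment]
  congr 1 with r
  rw [mul_right_comm, exp_mul_sinh_eq_shiftedGaussian_sub hs.ne']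
  ring

lemma integrableOn_exp_mul_pow_mul_sinh (ht : 0 < t) (κ : ℝ) (k : ℕ) :
    IntegrableOn (fun r => exp (-r ^ 2 / (2 * t)) * r ^ k * sinh (κ * r)) (Ioi 0) := by
  obtain ⟨s, hs, rfl⟩ : ∃ s, 0 < s ∧ s ^ 2 = t := ⟨√t, sqrt_pos.2 ht, sq_sqrt ht.le⟩
  refine IntegrableOn.congr_fun (((integrableOn_pow_mul_shiftedGaussian (κ * s ^ 2) hs k).sub
    (integrableOn_pow_mul_shiftedGaussian (-(κ * s ^ 2)) hs k)).const_mul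
      (exp (κ ^ 2 * s ^ 2 / 2) / 2)) (fun r _ => ?_) measurableSet_Ioi
  rw [mul_right_comm, exp_mul_sinh_eq_shiftedGaussian_sub hs.ne', Pi.sub_apply]
  ring

lemma sinhMoment_two (hs : 0 < s) (κ : ℝ) :
    sinhMoment κ (s ^ 2) 2 = κ * s ^ 4 +
      s ^ 3 * (κ ^ 2 * s ^ 2 + 1) * exp (κ ^ 2 * s ^ 2 / 2) * gaussPrimitive (κ * s) := by
  have hB : κ * s ^ 2 / s = κ * s := by field_simp
  rw [sinhMoment_eq_sub hs, integral_Ioi_sq_mul_shiftedGaussian _ hs,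
    integral_Ioi_sq_mul_shiftedGaussian _ hs]
  simp only [neg_div, hB, gaussPrimitive_neg, neg_sq, exp_neg, mul_pow]
  field_simp
  ring

lemma sinhMoment_three (hs : 0 < s) (κ : ℝ) :
    sinhMoment κ (s ^ 2) 3 =
      √(π / 2) * κ * s ^ 5 * (κ ^ 2 * s ^ 2 + 3) * exp (κ ^ 2 * s ^ 2 / 2) := by
  have hB : κ * s ^ 2 / s = κ * s := by field_simp
  rw [sinhMoment_eq_sub hs, integral_Ioi_pow_three_mul_shiftedGaussian _ hs,
    integral_Ioi_pow_three_mul_shiftedGaussian _ hs]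
  simp only [neg_div, hB, gaussPrimitive_neg, neg_sq, exp_neg, mul_pow]
  field_simp
  ring

lemma sinhMoment_four (hs : 0 < s) (κ : ℝ) :
    sinhMoment κ (s ^ 2) 4 = κ * s ^ 6 * (κ ^ 2 * s ^ 2 + 5) +
      s ^ 5 * (κ ^ 4 * s ^ 4 + 6 * κ ^ 2 * s ^ 2 + 3) * exp (κ ^ 2 * s ^ 2 / 2) *
        gaussPrimitive (κ * s) := by
  have hB : κ * s ^ 2 / s = κ * s := by field_simp
  rw [sinhMoment_eq_sub hs, integral_Ioi_pow_four_mul_shiftedGaussian _ hs,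
    integral_Ioi_pow_four_mul_shiftedGaussian _ hs]
  simp only [neg_div, hB, gaussPrimitive_neg, neg_sq, exp_neg, mul_pow]
  field_simp
  ring

lemma sinhMoment_pos {κ : ℝ} (ht : 0 < t) (hκ : 0 < κ) (k : ℕ) :
    0 < sinhMoment κ t k := by
  simpa [sinhMoment] using setIntegral_lt_setIntegral_of_forall_lt measurableSet_Ioi (by simp)
    integrableOn_zero (integrableOn_exp_mul_pow_mul_sinh ht κ k)
    fun r (hr : 0 < r) => by have := sinh_pos_iff.2 (mul_pos hκ hr); positivity

lemma integrableOn_exp_mul_pow_mul_sinh_mul_log {κ : ℝ} (ht : 0 < t) (hκ : 0 < κ) :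
    IntegrableOn (fun r => exp (-r ^ 2 / (2 * t)) * r ^ 3 * sinh (κ * r) *
      log (sinh (κ * r) / (κ * r))) (Ioi 0) := by
  refine ((integrableOn_exp_mul_pow_mul_sinh ht κ 4).const_mul κ).mono'
    (by fun_prop) ?_
  filter_upwards [ae_restrict_mem measurableSet_Ioi] with r (hr : 0 < r)
  have hκr := mul_pos hκ hr
  have hlog := log_sinh_div_self_nonneg hκr
  have hsinh := sinh_pos_iff.2 hκr
  rw [norm_of_nonneg (by positivity)]
  calc exp (-r ^ 2 / (2 * t)) * r ^ 3 * sinh (κ * r) * log (sinh (κ * r) / (κ * r))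
      ≤ exp (-r ^ 2 / (2 * t)) * r ^ 3 * sinh (κ * r) * (κ * r) := by
        gcongr
        linarith [log_sinh_div_self_lt hκr, log_nonneg (by linarith : (1 : ℝ) ≤ 1 + κ * r)]
    _ = κ * (exp (-r ^ 2 / (2 * t)) * r ^ 4 * sinh (κ * r)) := by ring

end sinhMoment

theorem integral_log_sinh_lt_sinhMoment {κ t : ℝ} (hκ : 0 < κ) (ht : 0 < t) :
    ∫ r in Ioi 0,
        exp (-r ^ 2 / (2 * t)) * r ^ 3 * sinh (κ * r) * log (sinh (κ * r) / (κ * r)) <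
      κ * sinhMoment κ t 4 -
        sinhMoment κ t 3 * log (1 + κ * (sinhMoment κ t 3 / sinhMoment κ t 2)) := by
  set w : ℕ → ℝ → ℝ := fun k r => exp (-r ^ 2 / (2 * t)) * r ^ k * sinh (κ * r)
  have hw (k : ℕ) : IntegrableOn (w k) (Ioi 0) := integrableOn_exp_mul_pow_mul_sinh ht κ k
  have hw' (a : ℝ) (k : ℕ) : IntegrableOn (fun r => a * w k r) (Ioi 0) := (hw k).const_mul a
  set b := sinhMoment κ t 3 / sinhMoment κ t 2
  have hb : 0 < b := div_pos (sinhMoment_pos ht hκ 3) (sinhMoment_pos ht hκ 2)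
  have hmean : sinhMoment κ t 3 - b * sinhMoment κ t 2 = 0 := by
    rw [div_mul_cancel₀ _ (sinhMoment_pos ht hκ 2).ne', sub_self]
  have hlin : IntegrableOn (fun r => w 3 r - b * w 2 r) (Ioi 0) := (hw 3).sub' (hw' b 2)
  set L := log (1 + κ * b)
  set c := κ * b / (1 + κ * b)
  calc _ < ∫ r in Ioi 0, κ * w 4 r - L * w 3 r - c * (w 3 r - b * w 2 r) := by
        refine setIntegral_lt_setIntegral_of_forall_lt measurableSet_Ioi (by simp)
          (integrableOn_exp_mul_pow_mul_sinh_mul_log ht hκ)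
          (((hw' κ 4).sub' (hw' L 3)).sub' (hlin.const_mul c)) fun r (hr : 0 < r) => ?_
        have hw2 : 0 < w 2 r := by have := sinh_pos_iff.2 (mul_pos hκ hr); positivity
        calc _ = w 2 r * (r * log (sinh (κ * r) / (κ * r))) := by ring
          _ < w 2 r * (κ * r ^ 2 - r * L - κ * b * (r - b) / (1 + κ * b)) :=
            mul_lt_mul_of_pos_left (mul_log_sinh_div_lt hκ hr hb) hw2
          _ = _ := by ring
    _ = κ * sinhMoment κ t 4 - L * sinhMoment κ t 3 -
          c * (sinhMoment κ t 3 - b * sinhMoment κ t 2) := by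
        rw [integral_sub ((hw' κ 4).sub' (hw' L 3)) (hlin.const_mul c),
          integral_sub (hw' κ 4) (hw' L 3)]
        simp only [integral_const_mul, integral_sub (hw 3) (hw' b 2)]
        rfl
    _ = _ := by rw [hmean]; ring

/-- Upper bound on `D(t) = η'(t)` for `κ > 0` and `t > 0`. -/
theorem eta_deriv_upper_bound (κ : ℝ) (hκ : 0 < κ) (t : ℝ) (ht : 0 < t) :
    etaDeriv κ t <
      (1 / 2) * κ ^ 2 * t * (κ ^ 2 * t + 5) +
        (1 / 2) * κ * t ^ ((1 : ℝ) / 2) * (κ ^ 4 * t ^ 2 + 6 * κ ^ 2 * t + 3) *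
          Real.exp (κ ^ 2 * t / 2) * alphaFun κ t -
        (1 / 2) * Real.sqrt (π / 2) * κ * t ^ ((1 : ℝ) / 2) * (κ ^ 2 * t + 3) *
          Real.exp (κ ^ 2 * t / 2) *
          Real.log (1 +
            Real.sqrt (π / 2) * (κ ^ 2 * t * (κ ^ 2 * t + 3) * Real.exp (κ ^ 2 * t / 2)) /
              (κ * t ^ ((1 : ℝ) / 2) +
                (κ ^ 2 * t + 1) * Real.exp (κ ^ 2 * t / 2) * alphaFun κ t)) := by
  have hbound := integral_log_sinh_lt_sinhMoment hκ ht
  obtain ⟨s, hs, rfl⟩ : ∃ s, 0 < s ∧ s ^ 2 = t := ⟨√t, sqrt_pos.2 ht, sq_sqrt ht.le⟩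
  have hroot : (s ^ 2) ^ ((1 : ℝ) / 2) = s := by rw [← sqrt_eq_rpow, sqrt_sq hs.le]
  have hα : alphaFun κ (s ^ 2) = gaussPrimitive (κ * s) := by
    rw [alphaFun, sqrt_sq hs.le, gaussPrimitive]
  rw [sinhMoment_two hs, sinhMoment_three hs, sinhMoment_four hs] at hbound
  have hratio : κ * (√(π / 2) * κ * s ^ 5 * (κ ^ 2 * s ^ 2 + 3) * exp (κ ^ 2 * s ^ 2 / 2) /
      (κ * s ^ 4 +
        s ^ 3 * (κ ^ 2 * s ^ 2 + 1) * exp (κ ^ 2 * s ^ 2 / 2) * gaussPrimitive (κ * s))) =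
      √(π / 2) * (κ ^ 2 * s ^ 2 * (κ ^ 2 * s ^ 2 + 3) * exp (κ ^ 2 * s ^ 2 / 2)) /
        (κ * s + (κ ^ 2 * s ^ 2 + 1) * exp (κ ^ 2 * s ^ 2 / 2) * gaussPrimitive (κ * s)) := by
    field_simp
  rw [hratio] at hbound
  rw [etaDeriv, hroot, hα]
  calc _ < 1 / (2 * (s ^ 2) ^ 2) * _ := mul_lt_mul_of_pos_left hbound (by positivity)
    _ = _ := by field_simp
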